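/- For real t ≥ 3, define F(t) = max over x ∈ [1/2, 1] of 5/t - 1 + (2(t-1)/t)x + ((t-2)/t)(1/x) + (2√(t-1)/t)·√(-2x²+3x-1)/x. Then F is monotonically non-increasing in t on [3, ∞). -/
import Mathlib


open Real Set

/-- The conditional weighted Lovász theta value `θ[(C_5, w), t]` of a 5-cycle with one
vertex constrained to contribute `1/t`. -/
noncomputable def thetaC5 (t : ℝ) : ℝ :=
  sSup {y : ℝ | ∃ x ∈ Icc (1/2 : ℝ) 1,
    y = 5 / t - 1 + (2 * (t - 1) / t) * x + ((t - 2) / t) * (1 / x) +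
      (2 * Real.sqrt (t - 1) / t) * Real.sqrt (-2 * x ^ 2 + 3 * x - 1) / x}

noncomputable def fC5 (t x : ℝ) : ℝ :=
  5 / t - 1 + (2 * (t - 1) / t) * x + ((t - 2) / t) * (1 / x) +
      (2 * Real.sqrt (t - 1) / t) * Real.sqrt (-2 * x ^ 2 + 3 * x - 1) / x

lemma fC5_eq (t x : ℝ) (ht : t ≠ 0) (hx : x ≠ 0) :
    fC5 t x = -1 + 2*x + 1/x + (5 - 2*x - 2/x)/t
      + (Real.sqrt (t-1) / t) * (2 * Real.sqrt (-2*x^2+3*x-1) / x) := by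
  unfold fC5; field_simp; ring

lemma sqrt_div_anti {t₁ t₂ : ℝ} (h₁ : 3 ≤ t₁) (h : t₁ ≤ t₂) :
    Real.sqrt (t₂-1)/t₂ ≤ Real.sqrt (t₁-1)/t₁ := by
  have ht₁ : (0:ℝ) < t₁ := by linarith
  have ht₂ : (0:ℝ) < t₂ := by linarith
  rw [div_le_div_iff₀ ht₂ ht₁]
  have key : (t₂-1) * t₁^2 ≤ (t₁-1) * t₂^2 := by nlinarith [mul_nonneg (sub_nonneg.2 h) (show (0:ℝ) ≤ t₁*t₂ - t₁ - t₂ by nlinarith)]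
  calc Real.sqrt (t₂-1) * t₁ = Real.sqrt ((t₂-1) * t₁^2) := by
        rw [Real.sqrt_mul (by linarith), Real.sqrt_sq ht₁.le]
    _ ≤ Real.sqrt ((t₁-1) * t₂^2) := Real.sqrt_le_sqrt key
    _ = Real.sqrt (t₁-1) * t₂ := by
        rw [Real.sqrt_mul (by linarith), Real.sqrt_sq ht₂.le]

lemma fC5_mono {t₁ t₂ x : ℝ} (h₁ : 3 ≤ t₁) (h : t₁ ≤ t₂) (hx : x ∈ Icc (1/2 : ℝ) 1) :
    fC5 t₂ x ≤ fC5 t₁ x := by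
  obtain ⟨hxl, hxu⟩ := hx
  have hx0 : (0:ℝ) < x := by linarith
  have ht₁ : (0:ℝ) < t₁ := by linarith
  have ht₂ : (0:ℝ) < t₂ := by linarith
  rw [fC5_eq t₁ x ht₁.ne' hx0.ne', fC5_eq t₂ x ht₂.ne' hx0.ne']
  have hA : (0:ℝ) ≤ 5 - 2*x - 2/x := by
    have h2 : 2/x ≤ 5 - 2*x := by
      rw [div_le_iff₀ hx0]; nlinarith
    linarith
  have hs : (0:ℝ) ≤ 2 * Real.sqrt (-2*x^2+3*x-1) / x :=
    div_nonneg (by positivity) hx0.le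
  have h1 : (5 - 2*x - 2/x)/t₂ ≤ (5 - 2*x - 2/x)/t₁ :=
    div_le_div_of_nonneg_left hA ht₁ h |>.trans_eq rfl
  have h2 : (Real.sqrt (t₂-1) / t₂) * (2 * Real.sqrt (-2*x^2+3*x-1) / x)
      ≤ (Real.sqrt (t₁-1) / t₁) * (2 * Real.sqrt (-2*x^2+3*x-1) / x) :=
    mul_le_mul_of_nonneg_right (sqrt_div_anti h₁ h) hs
  linarith

lemma fC5_le_ten {t x : ℝ} (ht : 3 ≤ t) (hx : x ∈ Icc (1/2 : ℝ) 1) :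
    fC5 t x ≤ 12 := by
  obtain ⟨hxl, hxu⟩ := hx
  have hx0 : (0:ℝ) < x := by linarith
  have ht0 : (0:ℝ) < t := by linarith
  rw [fC5_eq t x ht0.ne' hx0.ne']
  have hxi : 1/x ≤ 2 := by rw [div_le_iff₀ hx0]; linarith
  have hA : 5 - 2*x - 2/x ≤ 4 := by
    have h1 : (1:ℝ) ≤ 1/x := by rw [le_div_iff₀ hx0]; linarith
    have h2 : (2:ℝ)/x = 2*(1/x) := by ring
    linarith
  have hA0 : (0:ℝ) ≤ 5 - 2*x - 2/x := by
    have h2 : 2/x ≤ 5 - 2*x := by rw [div_le_iff₀ hx0]; nlinarith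
    linarith
  have hAd : (5 - 2*x - 2/x)/t ≤ 4 := by
    calc (5 - 2*x - 2/x)/t ≤ (5 - 2*x - 2/x)/1 := by
          apply div_le_div_of_nonneg_left hA0 one_pos (by linarith)
      _ ≤ 4 := by rw [div_one]; exact hA
  have hr : Real.sqrt (t-1) / t ≤ 1 := by
    rw [div_le_one ht0]
    calc Real.sqrt (t-1) ≤ Real.sqrt (t^2) := Real.sqrt_le_sqrt (by nlinarith)
      _ = t := by rw [Real.sqrt_sq ht0.le]
  have hs1 : Real.sqrt (-2*x^2+3*x-1) ≤ 1 := by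
    calc Real.sqrt (-2*x^2+3*x-1) ≤ Real.sqrt 1 := Real.sqrt_le_sqrt (by nlinarith)
      _ = 1 := Real.sqrt_one
  have hs : 2 * Real.sqrt (-2*x^2+3*x-1) / x ≤ 4 := by
    rw [div_le_iff₀ hx0]; nlinarith [Real.sqrt_nonneg (-2*x^2+3*x-1)]
  have hs0 : (0:ℝ) ≤ 2 * Real.sqrt (-2*x^2+3*x-1) / x :=
    div_nonneg (by positivity) hx0.le
  have hr0 : (0:ℝ) ≤ Real.sqrt (t-1) / t := div_nonneg (Real.sqrt_nonneg _) ht0.le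
  have hlast : (Real.sqrt (t-1) / t) * (2 * Real.sqrt (-2*x^2+3*x-1) / x) ≤ 4 := by
    calc (Real.sqrt (t-1) / t) * (2 * Real.sqrt (-2*x^2+3*x-1) / x) ≤ 1 * 4 :=
          mul_le_mul hr hs hs0 one_pos.le
      _ = 4 := by ring
  linarith

/-- `θ[(C_5, w), t]` is monotonically non-increasing in `t` on `[3, ∞)`. -/
theorem stmt_8 (t₁ t₂ : ℝ) (h₁ : 3 ≤ t₁) (h₁₂ : t₁ ≤ t₂) :
    thetaC5 t₂ ≤ thetaC5 t₁ := by
  have hmem : (1/2 : ℝ) ∈ Icc (1/2 : ℝ) 1 := ⟨le_rfl, by norm_num⟩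
  have hbdd : BddAbove {y : ℝ | ∃ x ∈ Icc (1/2 : ℝ) 1,
      y = 5 / t₁ - 1 + (2 * (t₁ - 1) / t₁) * x + ((t₁ - 2) / t₁) * (1 / x) +
        (2 * Real.sqrt (t₁ - 1) / t₁) * Real.sqrt (-2 * x ^ 2 + 3 * x - 1) / x} := by
    refine ⟨12, fun y hy => ?_⟩
    obtain ⟨x, hx, rfl⟩ := hy
    exact fC5_le_ten h₁ hx
  have hne : {y : ℝ | ∃ x ∈ Icc (1/2 : ℝ) 1,
      y = 5 / t₂ - 1 + (2 * (t₂ - 1) / t₂) * x + ((t₂ - 2) / t₂) * (1 / x) +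
        (2 * Real.sqrt (t₂ - 1) / t₂) * Real.sqrt (-2 * x ^ 2 + 3 * x - 1) / x}.Nonempty :=
    ⟨_, ⟨1/2, hmem, rfl⟩⟩
  unfold thetaC5
  refine csSup_le hne fun y hy => ?_
  obtain ⟨x, hx, rfl⟩ := hy
  calc (fC5 t₂ x) ≤ fC5 t₁ x := fC5_mono h₁ h₁₂ hx
    _ ≤ sSup _ := le_csSup hbdd ⟨x, hx, rfl⟩
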